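/- With θ defined by sin θ = 1/√(2ⁿ) and θ ∈ (0, π/2), after L applications of the Grover iteration to the uniform superposition, the probability of observing the marked basis state |a⟩ equals sin²((2L+1)θ); in particular, for n ≥ 2 and L = 1 this probability strictly exceeds the initial probability 1/2ⁿ. -/

import Mathlib

/-! With `s = sin θ = ⟪a, a₀⟫`, one Grover iteration acts on the pair of amplitudes
`(⟪a, v⟫, ⟪a₀, v⟫)` by the linear map `(x, y) ↦ ((1 - 4s²)x + 2sy, y - 2sx)`.
Starting from `(sin θ, cos 0)`, the angle-addition formulas show that after `L` steps the pair
is `(sin ((2L+1)θ), cos (2Lθ))`. This needs no basis of the invariant plane, so the degenerate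
case `n = 0`, where `a = a₀`, is not special. For `L = 1`, `sin 3θ = sin θ (3 - 4 sin² θ)`,
and `3 - 4 sin² θ > 1` when `sin² θ < 1/2`. -/

local notation "⟪" x ", " y "⟫" => @inner ℂ _ _ x y

namespace Real

lemma sin_add_two_mul_eq (A θ : ℝ) :
    sin (A + 2 * θ) = (1 - 4 * sin θ ^ 2) * sin A + 2 * sin θ * cos (A - θ) := by
  rw [sin_add, cos_sub, sin_two_mul, cos_two_mul]
  linear_combination 2 * sin A * sin_sq_add_cos_sq θ

lemma cos_add_two_mul_eq (B θ : ℝ) :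
    cos (B + 2 * θ) = cos B - 2 * sin θ * sin (B + θ) := by
  rw [cos_add, sin_add, sin_two_mul, cos_two_mul]
  linear_combination 2 * cos B * sin_sq_add_cos_sq θ

lemma sin_sq_lt_sin_three_mul_sq {θ : ℝ} (h₀ : sin θ ≠ 0) (h : sin θ ^ 2 < 1 / 2) :
    sin θ ^ 2 < sin (3 * θ) ^ 2 := by
  have hpos : 0 < sin θ ^ 2 := by positivity
  have hgap : 0 < (3 - 4 * sin θ ^ 2) ^ 2 - 1 := by nlinarith
  rw [sin_three_mul]
  nlinarith [mul_pos hpos hgap]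

end Real

section Grover

variable (𝕜 : Type*) {E : Type*} [RCLike 𝕜] [NormedAddCommGroup E] [InnerProductSpace 𝕜 E]

def householder (u v : E) : E :=
  v - (2 : 𝕜) • (inner 𝕜 u v • u)

def groverStep (u w v : E) : E :=
  -householder 𝕜 w (householder 𝕜 u v)

variable {𝕜} {u w : E} {s : ℝ}

lemma inner_householder_right (x u v : E) :
    inner 𝕜 x (householder 𝕜 u v) = inner 𝕜 x v - 2 * inner 𝕜 u v * inner 𝕜 x u := by
  rw [householder, inner_sub_right, inner_smul_right, inner_smul_right]
  ring

lemma inner_marked_groverStep (hu : inner 𝕜 u u = 1) (huw : inner 𝕜 u w = s) (v : E) :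
    inner 𝕜 u (groverStep 𝕜 u w v) = (1 - 4 * s ^ 2) * inner 𝕜 u v + 2 * s * inner 𝕜 w v := by
  have hwu : inner 𝕜 w u = s := by rw [← inner_conj_symm, huw, RCLike.conj_ofReal]
  simp only [groverStep, inner_neg_right, inner_householder_right, hu, huw, hwu]
  ring

lemma inner_start_groverStep (hw : inner 𝕜 w w = 1) (huw : inner 𝕜 u w = s) (v : E) :
    inner 𝕜 w (groverStep 𝕜 u w v) = inner 𝕜 w v - 2 * s * inner 𝕜 u v := by
  have hwu : inner 𝕜 w u = s := by rw [← inner_conj_symm, huw, RCLike.conj_ofReal]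
  simp only [groverStep, inner_neg_right, inner_householder_right, hw, hwu]
  ring

theorem inner_groverStep_iterate {θ : ℝ} (hu : inner 𝕜 u u = 1) (hw : inner 𝕜 w w = 1)
    (huw : inner 𝕜 u w = Real.sin θ) (L : ℕ) :
    inner 𝕜 u ((groverStep 𝕜 u w)^[L] w) = Real.sin ((2 * L + 1) * θ) ∧
      inner 𝕜 w ((groverStep 𝕜 u w)^[L] w) = Real.cos (2 * L * θ) := by
  induction L with
  | zero =>
    simp only [Function.iterate_zero, id_eq, CharP.cast_eq_zero, mul_zero, zero_mul, zero_add,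
      one_mul, Real.cos_zero, RCLike.ofReal_one]
    exact ⟨huw, hw⟩
  | succ L ih =>
    rw [Function.iterate_succ_apply', inner_marked_groverStep hu huw,
      inner_start_groverStep hw huw, ih.1, ih.2]
    push_cast
    constructor
    · rw [show (2 * (L + 1) + 1) * θ = (2 * L + 1) * θ + 2 * θ by ring, Real.sin_add_two_mul_eq,
        show (2 * L + 1) * θ - θ = 2 * L * θ by ring]
      push_cast
      ring
    · rw [show 2 * (L + 1) * θ = 2 * L * θ + 2 * θ by ring, Real.cos_add_two_mul_eq,
        show 2 * L * θ + θ = (2 * L + 1) * θ by ring]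
      push_cast
      ring

end Grover

theorem grover_success_probability (n : ℕ) (a : Fin (2 ^ n)) :
    let E := EuclideanSpace ℂ (Fin (2 ^ n))
    let ea : E := EuclideanSpace.single a (1 : ℂ)
    let a₀ : E := WithLp.toLp 2 (fun _ => ((1 / Real.sqrt (2 ^ n) : ℝ) : ℂ))
    let Ua : E → E := fun v => v - (2 : ℂ) • (⟪ea, v⟫ • ea)
    let Ua₀ : E → E := fun v => (2 : ℂ) • (⟪a₀, v⟫ • a₀) - v
    let UGrov : E → E := fun v => Ua₀ (Ua v)
    let θ : ℝ := Real.arcsin (1 / Real.sqrt (2 ^ n))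
    (∀ L : ℕ, ‖(⟪ea, UGrov^[L] a₀⟫)‖ ^ 2 =
        Real.sin ((2 * L + 1) * θ) ^ 2) ∧
    (2 ≤ n → Real.sin ((2 * 1 + 1) * θ) ^ 2 > 1 / 2 ^ n) := by
  intro E ea a₀ Ua Ua₀ UGrov θ
  have hN : (0 : ℝ) < 2 ^ n := by positivity
  have hsin : Real.sin θ = 1 / √(2 ^ n) := by
    refine Real.sin_arcsin (by linarith [show 0 ≤ 1 / √(2 ^ n) by positivity]) ?_
    rw [div_le_one (by positivity), Real.one_le_sqrt]
    exact one_le_pow₀ one_le_two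
  have hsin_sq : Real.sin θ ^ 2 = 1 / 2 ^ n := by
    rw [hsin, div_pow, one_pow, Real.sq_sqrt hN.le]
  have h_ea : ⟪ea, ea⟫ = 1 := by
    simp only [E, ea]
    simp
  have h_a₀ : ⟪a₀, a₀⟫ = 1 := by
    have h : (2 : ℝ) ^ n * (1 / √(2 ^ n) * (1 / √(2 ^ n))) = 1 := by
      rw [← sq, div_pow, one_pow, Real.sq_sqrt hN.le, mul_one_div_cancel hN.ne']
    simp only [E, a₀]
    rw [PiLp.inner_apply]
    simp only [RCLike.inner_apply, Complex.conj_ofReal, Finset.sum_const, Finset.card_univ,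
      Fintype.card_fin, nsmul_eq_mul]
    exact_mod_cast h
  have h_cross : ⟪ea, a₀⟫ = (Real.sin θ : ℂ) := by
    simp only [E, ea, a₀]
    rw [EuclideanSpace.inner_single_left]
    simp [hsin]
  have hG : UGrov = groverStep ℂ ea a₀ := funext fun _ => (neg_sub _ _).symm
  refine ⟨fun L => ?_, fun hn => ?_⟩
  · rw [hG, (inner_groverStep_iterate h_ea h_a₀ h_cross L).1, RCLike.norm_ofReal, sq_abs]
  · rw [← hsin_sq, gt_iff_lt, show (2 * 1 + 1 : ℝ) = 3 by norm_num]
    refine Real.sin_sq_lt_sin_three_mul_sq (by rw [hsin]; positivity) ?_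
    rw [hsin_sq]
    exact one_div_lt_one_div_of_lt two_pos
      (lt_of_lt_of_le (by norm_num) (pow_le_pow_right₀ one_le_two hn))
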